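/- Let n ≥ 0, let a, b, c, d ∈ ℂ^{n+1}, and define g : ℂ^{n+1} × ℂ^{n+1} → ℂ by g(z,w) = (a·z + b·w)(c·conj(w) − d·conj(z)) − (c·z + d·w)(a·conj(w) − b·conj(z)). Then for every integer k ≥ 1 the Euclidean Laplacian of g^k on ℝ^{4n+4} ≅ ℂ^{n+1} × ℂ^{n+1} equals Δ(g^k) = 4k(k+1)·(b·c − a·d)·g^{k−1}. In particular, if a·d = b·c, then g^k is a harmonic function on ℝ^{4n+4}. -/

import Mathlib

/-!
Write `g x = B x x` for the real bilinear form `B x y = ℓ₁ x * m₁ y - ℓ₂ x * m₂ y`, where `ℓⱼ` are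
complex-linear and `mⱼ` conjugate-linear. For `f` of class `C²`,
`Δ (f ^ k) = k f ^ (k - 1) Δ f + k (k - 1) f ^ (k - 2) ∑ᵥ (Df v) ^ 2`, the sum running over the real
orthonormal basis. That basis comes in pairs `v, I • v`, and `ℓ v * m v + ℓ (I • v) * m (I • v)`
equals `2 ℓ v * m v` if `ℓ` is complex-linear and `m` conjugate-linear, but vanishes if both are of
the same type (this is `Δ = 4 ∑ ∂² / ∂zⱼ ∂z̄ⱼ`). Hence `Δ g = 2 ∑ᵥ B v v = 8 (b·c - a·d)`, and
splitting `Dg` into its complex-linear and conjugate-linear parts gives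
`∑ᵥ (Dg v) ^ 2 = 4 (b·c - a·d) g`.
-/

open Complex Finset

/-- The Euclidean Laplacian on `ℂ^{n+1} × ℂ^{n+1} ≅ ℝ^{4n+4}`: the sum of the
second directional derivatives (over `ℝ`) along the real orthonormal basis
directions `(e_i, 0)`, `(i·e_i, 0)`, `(0, e_i)`, `(0, i·e_i)`. -/
noncomputable def euclLaplacian2 {n : ℕ}
    (f : (Fin (n + 1) → ℂ) × (Fin (n + 1) → ℂ) → ℂ)
    (x : (Fin (n + 1) → ℂ) × (Fin (n + 1) → ℂ)) : ℂ :=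
  ∑ i : Fin (n + 1),
    (fderiv ℝ (fun y => fderiv ℝ f y (Pi.single i 1, 0)) x (Pi.single i 1, 0) +
     fderiv ℝ (fun y => fderiv ℝ f y (Pi.single i Complex.I, 0)) x
       (Pi.single i Complex.I, 0) +
     fderiv ℝ (fun y => fderiv ℝ f y (0, Pi.single i 1)) x (0, Pi.single i 1) +
     fderiv ℝ (fun y => fderiv ℝ f y (0, Pi.single i Complex.I)) x
       (0, Pi.single i Complex.I))

section SecondDerivative

variable {𝕜 E F 𝔸 : Type*} [NontriviallyNormedField 𝕜] [NormedAddCommGroup E] [NormedSpace 𝕜 E]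

theorem fderiv_fderiv_pow_apply [NormedCommRing 𝔸] [NormedAlgebra 𝕜 𝔸] {f : E → 𝔸}
    (hf : ContDiff 𝕜 2 f) (k : ℕ) (x v : E) :
    fderiv 𝕜 (fun y => fderiv 𝕜 (fun z => f z ^ k) y v) x v =
      k * f x ^ (k - 1) * fderiv 𝕜 (fun y => fderiv 𝕜 f y v) x v +
        k * (k - 1 : ℕ) * f x ^ (k - 2) * fderiv 𝕜 f x v ^ 2 := by
  have hdf : ∀ y, HasFDerivAt f (fderiv 𝕜 f y) y := fun y =>
    (hf.differentiable (by norm_num) y).hasFDerivAt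
  have hpow : (fun y => fderiv 𝕜 (fun z => f z ^ k) y v) =
      fun y => k * f y ^ (k - 1) * fderiv 𝕜 f y v := by
    ext y
    simp [((hdf y).pow k).fderiv, nsmul_eq_mul, mul_assoc]
  have hdv : DifferentiableAt 𝕜 (fun y => fderiv 𝕜 f y v) x :=
    ((hf.fderiv_right (m := 1) le_rfl).differentiable one_ne_zero x).clm_apply
      (differentiableAt_const v)
  rw [hpow, ((((hdf x).pow (k - 1)).const_mul (k : 𝔸)).fun_mul hdv.hasFDerivAt).fderiv]
  simp only [add_apply, smul_apply, smul_eq_mul, nsmul_eq_mul, Nat.sub_sub]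
  ring

variable [NormedAddCommGroup F] [NormedSpace 𝕜 F]

theorem hasFDerivAt_bilinear_diag (B : E →L[𝕜] E →L[𝕜] F) (x : E) :
    HasFDerivAt (fun y => B y y) (B x + B.flip x) x := by
  refine (B.hasFDerivAt_of_bilinear (hasFDerivAt_id x) (hasFDerivAt_id x)).congr_fderiv ?_
  ext v
  simp

theorem fderiv_bilinear_diag_apply (B : E →L[𝕜] E →L[𝕜] F) (x v : E) :
    fderiv 𝕜 (fun y => B y y) x v = B x v + B v x := by
  simp [(hasFDerivAt_bilinear_diag B x).fderiv]

theorem contDiff_bilinear_diag (B : E →L[𝕜] E →L[𝕜] F) {m : WithTop ℕ∞} :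
    ContDiff 𝕜 m (fun y => B y y) :=
  B.contDiff.clm_apply contDiff_id

theorem fderiv_fderiv_bilinear_diag_apply (B : E →L[𝕜] E →L[𝕜] F) (x v : E) :
    fderiv 𝕜 (fun y => fderiv 𝕜 (fun z => B z z) y v) x v = B v v + B v v := by
  have h : (fun y => fderiv 𝕜 (fun z => B z z) y v) = ⇑(B.flip v + B v) := by
    ext y
    simp [fderiv_bilinear_diag_apply]
  rw [h, ContinuousLinearMap.fderiv]
  simp

end SecondDerivative

abbrev ComplexPair (n : ℕ) := (Fin (n + 1) → ℂ) × (Fin (n + 1) → ℂ)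

section BasisSum

variable {n : ℕ}

def euclBasisSum (φ : ComplexPair n → ℂ) : ℂ :=
  ∑ i : Fin (n + 1), (φ (Pi.single i 1, 0) + φ (Pi.single i I, 0) +
    φ (0, Pi.single i 1) + φ (0, Pi.single i I))

theorem euclLaplacian2_eq_euclBasisSum (f : ComplexPair n → ℂ) (x : ComplexPair n) :
    euclLaplacian2 f x = euclBasisSum fun v => fderiv ℝ (fun y => fderiv ℝ f y v) x v :=
  rfl

theorem euclBasisSum_add (φ ψ : ComplexPair n → ℂ) :
    euclBasisSum (fun v => φ v + ψ v) = euclBasisSum φ + euclBasisSum ψ := by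
  simp only [euclBasisSum, ← sum_add_distrib]
  exact sum_congr rfl fun i _ => by ring

theorem euclBasisSum_sub (φ ψ : ComplexPair n → ℂ) :
    euclBasisSum (fun v => φ v - ψ v) = euclBasisSum φ - euclBasisSum ψ := by
  simp only [euclBasisSum, ← sum_sub_distrib]
  exact sum_congr rfl fun i _ => by ring

theorem euclBasisSum_const_mul (c : ℂ) (φ : ComplexPair n → ℂ) :
    euclBasisSum (fun v => c * φ v) = c * euclBasisSum φ := by
  simp only [euclBasisSum, mul_sum]
  exact sum_congr rfl fun i _ => by ring

theorem euclBasisSum_mul {ℓ m : ComplexPair n → ℂ} {α β : ℂ}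
    (hℓ : ∀ x, ℓ (I • x) = α * ℓ x) (hm : ∀ x, m (I • x) = β * m x) :
    euclBasisSum (fun v => ℓ v * m v) = (1 + α * β) *
      ∑ i, (ℓ (Pi.single i 1, 0) * m (Pi.single i 1, 0) +
        ℓ (0, Pi.single i 1) * m (0, Pi.single i 1)) := by
  have hfst (i : Fin (n + 1)) : ((Pi.single i I, 0) : ComplexPair n) = I • (Pi.single i 1, 0) := by
    simp [← Pi.single_smul]
  have hsnd (i : Fin (n + 1)) : ((0, Pi.single i I) : ComplexPair n) = I • (0, Pi.single i 1) := by
    simp [← Pi.single_smul]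
  simp only [euclBasisSum, hfst, hsnd, hℓ, hm, mul_sum]
  exact sum_congr rfl fun i _ => by ring

theorem euclLaplacian2_pow {f : ComplexPair n → ℂ} (hf : ContDiff ℝ 2 f) (k : ℕ)
    (x : ComplexPair n) :
    euclLaplacian2 (fun y => f y ^ k) x =
      k * f x ^ (k - 1) * euclLaplacian2 f x +
        k * (k - 1 : ℕ) * f x ^ (k - 2) * euclBasisSum (fun v => fderiv ℝ f x v ^ 2) := by
  simp only [euclLaplacian2_eq_euclBasisSum, fderiv_fderiv_pow_apply hf]
  rw [euclBasisSum_add, euclBasisSum_const_mul, euclBasisSum_const_mul]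

end BasisSum

section Forms

variable {n : ℕ}

noncomputable def holLin (u v : Fin (n + 1) → ℂ) : ComplexPair n →L[ℝ] ℂ :=
  LinearMap.toContinuousLinearMap
    { toFun := fun p => u ⬝ᵥ p.1 + v ⬝ᵥ p.2
      map_add' := fun p q => by simp only [Prod.fst_add, Prod.snd_add, dotProduct_add]; ring
      map_smul' := fun r p => by simp [dotProduct_smul, smul_add] }

noncomputable def antiholLin (u v : Fin (n + 1) → ℂ) : ComplexPair n →L[ℝ] ℂ :=
  LinearMap.toContinuousLinearMap
    { toFun := fun p => u ⬝ᵥ star p.1 + v ⬝ᵥ star p.2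
      map_add' := fun p q => by
        simp only [Prod.fst_add, Prod.snd_add, star_add, dotProduct_add]; ring
      map_smul' := fun r p => by simp [star_smul, dotProduct_smul, smul_add] }

@[simp]
theorem holLin_apply (u v : Fin (n + 1) → ℂ) (p : ComplexPair n) :
    holLin u v p = u ⬝ᵥ p.1 + v ⬝ᵥ p.2 :=
  rfl

@[simp]
theorem antiholLin_apply (u v : Fin (n + 1) → ℂ) (p : ComplexPair n) :
    antiholLin u v p = u ⬝ᵥ star p.1 + v ⬝ᵥ star p.2 :=
  rfl

theorem holLin_I_smul (u v : Fin (n + 1) → ℂ) (p : ComplexPair n) :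
    holLin u v (I • p) = I * holLin u v p := by
  simp [dotProduct_smul, mul_add]

theorem antiholLin_I_smul (u v : Fin (n + 1) → ℂ) (p : ComplexPair n) :
    antiholLin u v (I • p) = -I * antiholLin u v p := by
  simp [star_smul, dotProduct_smul, mul_add]

@[simp]
theorem holLin_single_fst (u v : Fin (n + 1) → ℂ) (i : Fin (n + 1)) :
    holLin u v (Pi.single i 1, 0) = u i := by
  simp

@[simp]
theorem holLin_single_snd (u v : Fin (n + 1) → ℂ) (i : Fin (n + 1)) :
    holLin u v (0, Pi.single i 1) = v i := by
  simp

@[simp]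
theorem antiholLin_single_fst (u v : Fin (n + 1) → ℂ) (i : Fin (n + 1)) :
    antiholLin u v (Pi.single i 1, 0) = u i := by
  simp

@[simp]
theorem antiholLin_single_snd (u v : Fin (n + 1) → ℂ) (i : Fin (n + 1)) :
    antiholLin u v (0, Pi.single i 1) = v i := by
  simp

end Forms

section QuadBilin

variable {n : ℕ} (a b c d : Fin (n + 1) → ℂ)

-- At `x = (z, w)`, `quadBilin a b c d x x = (a·z + b·w)(c·w̄ - d·z̄) - (c·z + d·w)(a·w̄ - b·z̄)`.
noncomputable def quadBilin : ComplexPair n →L[ℝ] ComplexPair n →L[ℝ] ℂ :=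
  (ContinuousLinearMap.mul ℝ ℂ).bilinearComp (holLin a b) (antiholLin (-d) c) -
    (ContinuousLinearMap.mul ℝ ℂ).bilinearComp (holLin c d) (antiholLin (-b) a)

theorem quadBilin_apply (x y : ComplexPair n) :
    quadBilin a b c d x y =
      holLin a b x * antiholLin (-d) c y - holLin c d x * antiholLin (-b) a y :=
  rfl

theorem euclBasisSum_quadBilin :
    euclBasisSum (fun v => quadBilin a b c d v v) = 4 * (b ⬝ᵥ c - a ⬝ᵥ d) := by
  simp only [quadBilin_apply]
  rw [euclBasisSum_sub, euclBasisSum_mul (holLin_I_smul a b) (antiholLin_I_smul _ _),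
    euclBasisSum_mul (holLin_I_smul c d) (antiholLin_I_smul _ _)]
  simp only [holLin_single_fst, holLin_single_snd, antiholLin_single_fst,
    antiholLin_single_snd, Pi.neg_apply, mul_neg, I_mul_I, neg_neg, dotProduct, mul_sum,
    ← sum_sub_distrib]
  exact sum_congr rfl fun i _ => by ring

theorem euclBasisSum_quadBilin_polar_sq (p : ComplexPair n) :
    euclBasisSum (fun v => (quadBilin a b c d p v + quadBilin a b c d v p) ^ 2) =
      4 * (b ⬝ᵥ c - a ⬝ᵥ d) * quadBilin a b c d p p := by
  set H : ComplexPair n → ℂ := fun v =>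
    antiholLin (-d) c p * holLin a b v - antiholLin (-b) a p * holLin c d v
  set A : ComplexPair n → ℂ := fun v =>
    holLin a b p * antiholLin (-d) c v - holLin c d p * antiholLin (-b) a v
  have hH (x : ComplexPair n) : H (I • x) = I * H x := by
    simp only [H, holLin_I_smul]; ring
  have hA (x : ComplexPair n) : A (I • x) = -I * A x := by
    simp only [A, antiholLin_I_smul]; ring
  have hsq (v : ComplexPair n) : (quadBilin a b c d p v + quadBilin a b c d v p) ^ 2 =
      H v * H v + A v * A v + 2 * (H v * A v) := by
    simp only [quadBilin_apply, H, A]; ring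
  simp only [hsq]
  rw [euclBasisSum_add, euclBasisSum_add, euclBasisSum_const_mul, euclBasisSum_mul hH hH,
    euclBasisSum_mul hA hA, euclBasisSum_mul hH hA, neg_mul_neg, mul_neg, I_mul_I,
    add_neg_cancel, zero_mul, zero_mul, zero_add, zero_add]
  simp only [H, A, holLin_single_fst, holLin_single_snd, antiholLin_single_fst,
    antiholLin_single_snd, Pi.neg_apply, quadBilin_apply, dotProduct, sum_mul, mul_sum,
    ← sum_sub_distrib]
  exact sum_congr rfl fun i _ => by ring

theorem euclLaplacian2_quadBilin (p : ComplexPair n) :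
    euclLaplacian2 (fun x => quadBilin a b c d x x) p = 8 * (b ⬝ᵥ c - a ⬝ᵥ d) := by
  simp only [euclLaplacian2_eq_euclBasisSum, fderiv_fderiv_bilinear_diag_apply]
  rw [euclBasisSum_add, euclBasisSum_quadBilin]
  ring

end QuadBilin

theorem stmt_12_general (n : ℕ) (a b c d : Fin (n + 1) → ℂ) (k : ℕ)
    (g : (Fin (n + 1) → ℂ) × (Fin (n + 1) → ℂ) → ℂ)
    (hg : ∀ p, g p =
      ((∑ i, a i * p.1 i) + (∑ i, b i * p.2 i)) *
        ((∑ i, c i * (starRingEnd ℂ) (p.2 i)) - (∑ i, d i * (starRingEnd ℂ) (p.1 i))) -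
      ((∑ i, c i * p.1 i) + (∑ i, d i * p.2 i)) *
        ((∑ i, a i * (starRingEnd ℂ) (p.2 i)) - (∑ i, b i * (starRingEnd ℂ) (p.1 i)))) :
    (∀ p, euclLaplacian2 (fun x => g x ^ k) p =
      4 * (k : ℂ) * ((k : ℂ) + 1) *
        ((∑ i, b i * c i) - (∑ i, a i * d i)) * g p ^ (k - 1)) ∧
    ((∑ i, a i * d i) = (∑ i, b i * c i) →
      ∀ p, euclLaplacian2 (fun x => g x ^ k) p = 0) := by
  obtain rfl : g = fun x => quadBilin a b c d x x := by
    ext p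
    simp only [hg, quadBilin_apply, holLin_apply, dotProduct, antiholLin_apply, Pi.neg_apply,
      Pi.star_apply, RCLike.star_def, neg_mul, sum_neg_distrib]
    ring
  have hΔ (p : ComplexPair n) : euclLaplacian2 (fun x => quadBilin a b c d x x ^ k) p =
      4 * k * (k + 1) * (b ⬝ᵥ c - a ⬝ᵥ d) * quadBilin a b c d p p ^ (k - 1) := by
    rw [euclLaplacian2_pow (contDiff_bilinear_diag _), euclLaplacian2_quadBilin]
    simp only [fderiv_bilinear_diag_apply, euclBasisSum_quadBilin_polar_sq]
    rcases k with _ | _ | k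
    · simp
    · norm_num
    · simp only [show k + 1 + 1 - 1 = k + 1 by omega, show k + 1 + 1 - 2 = k by omega]
      push_cast
      ring
  exact ⟨hΔ, fun h p => by rw [hΔ, dotProduct, dotProduct, h, sub_self]; ring⟩

/-- for
`g(z,w) = (a·z + b·w)(c·conj w - d·conj z) - (c·z + d·w)(a·conj w - b·conj z)`
and `k ≥ 1`, one has `Δ(g^k) = 4k(k+1)(b·c - a·d) g^{k-1}`; in particular
`a·d = b·c` makes `g^k` harmonic on `ℝ^{4n+4}`. -/
theorem stmt_12 (n : ℕ) (a b c d : Fin (n + 1) → ℂ) (k : ℕ) (hk : 1 ≤ k)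
    (g : (Fin (n + 1) → ℂ) × (Fin (n + 1) → ℂ) → ℂ)
    (hg : ∀ p, g p =
      ((∑ i, a i * p.1 i) + (∑ i, b i * p.2 i)) *
        ((∑ i, c i * (starRingEnd ℂ) (p.2 i)) - (∑ i, d i * (starRingEnd ℂ) (p.1 i))) -
      ((∑ i, c i * p.1 i) + (∑ i, d i * p.2 i)) *
        ((∑ i, a i * (starRingEnd ℂ) (p.2 i)) - (∑ i, b i * (starRingEnd ℂ) (p.1 i)))) :
    (∀ p, euclLaplacian2 (fun x => g x ^ k) p =
      4 * (k : ℂ) * ((k : ℂ) + 1) *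
        ((∑ i, b i * c i) - (∑ i, a i * d i)) * g p ^ (k - 1)) ∧
    ((∑ i, a i * d i) = (∑ i, b i * c i) →
      ∀ p, euclLaplacian2 (fun x => g x ^ k) p = 0) :=
  stmt_12_general n a b c d k g hg
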